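/- arXiv:1705.00765 — 2 statements merged into one kernel-verified Lean document; each statement's English description precedes it below -/
import Mathlib

section
/- Let n ≥ 1, let u : (0,∞) × ℝⁿ → ℝ be smooth and satisfy ∂u/∂t = Δu − |∇u|², and let α, β, b, c, λ be real constants with α ≠ 0. Define H = αΔu − β|∇u|² − b·u/t − c·n/t. Then H satisfies the evolution equation ∂H/∂t = ΔH − 2⟨∇H, ∇u⟩ − 2(α−β)|∇²u − (λ/(2t))I|² − (2(α−β)/α)(λ/t)H − (b + 2(α−β)βλ/α)|∇u|²/t + (1 − 2(α−β)λ/α)·b·u/t² + (1 − 2(α−β)λ/α)·c·n/t² + (α−β)nλ²/(2t²). -/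
open MeasureTheory Real

noncomputable section

/-- Partial derivative of `g` at `x` in the `i`-th coordinate direction. -/
def pd {n : ℕ} (i : Fin n) (g : (Fin n → ℝ) → ℝ) (x : Fin n → ℝ) : ℝ :=
  fderiv ℝ g x (Pi.single i 1)

/-- Squared Euclidean norm of the (spatial) gradient of `g` at `x`. -/
def gradSq {n : ℕ} (g : (Fin n → ℝ) → ℝ) (x : Fin n → ℝ) : ℝ :=
  ∑ i, (pd i g x) ^ 2

/-- The (spatial) Laplacian of `g` at `x`. -/
def lap {n : ℕ} (g : (Fin n → ℝ) → ℝ) (x : Fin n → ℝ) : ℝ :=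
  ∑ i, pd i (pd i g) x

/-- The `(i,j)` entry of the Hessian of `g` at `x`. -/
def hess {n : ℕ} (i j : Fin n) (g : (Fin n → ℝ) → ℝ) (x : Fin n → ℝ) : ℝ :=
  pd i (pd j g) x

/-!
Write `W = ∂ₜu = Δu - |∇u|²`. Since `(t, x) ↦ u t x` is smooth, its second derivatives are
symmetric, so `∂ₜ` commutes with the spatial derivatives and
`∂ₜH = α ΔW - 2β ⟨∇u, ∇W⟩ - b W / t + b u / t² + c n / t²`.
On the other side, `ΔH - 2 ⟨∇H, ∇u⟩` is computed with Bochner's formula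
`Δ|∇u|² = 2 |∇²u|² + 2 ⟨∇u, ∇Δu⟩`, and `|∇²u - (λ/2t) I|² = |∇²u|² - (λ/t) Δu + n λ²/(4t²)`;
the remaining `λ Δu / t` terms are exactly those of `(λ/t) H`. What is left is a polynomial
identity in `Δ²u, Δ|∇u|², ⟨∇u, ∇Δu⟩, ⟨∇u, ∇|∇u|²⟩, |∇²u|², Δu, |∇u|², u`.
-/

open Set Topology

lemma fderiv_fderiv_apply_comm {E F : Type*} [NormedAddCommGroup E] [NormedSpace ℝ E]
    [NormedAddCommGroup F] [NormedSpace ℝ F] {f : E → F} {x : E} (hf : ContDiffAt ℝ 2 f x)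
    (v w : E) :
    fderiv ℝ (fun y => fderiv ℝ f y v) x w = fderiv ℝ (fun y => fderiv ℝ f y w) x v := by
  have hd : DifferentiableAt ℝ (fderiv ℝ f) x :=
    (hf.fderiv_right (m := 1) le_rfl).differentiableAt one_ne_zero
  rw [fderiv_clm_apply hd (differentiableAt_const v),
    fderiv_clm_apply hd (differentiableAt_const w)]
  simpa using (hf.isSymmSndFDerivAt (by simp)).eq w v

lemma sum_sum_sq_sub_mul_ite {ι : Type*} [Fintype ι] [DecidableEq ι] (A : ι → ι → ℝ) (μ : ℝ) :
    ∑ i, ∑ j, (A i j - μ * (if i = j then 1 else 0)) ^ 2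
      = ∑ i, ∑ j, A i j ^ 2 - 2 * μ * ∑ i, A i i + Fintype.card ι * μ ^ 2 := by
  have hrow : ∀ i, ∑ j, (A i j - μ * (if i = j then 1 else 0)) ^ 2
      = ∑ j, A i j ^ 2 + (μ ^ 2 - 2 * μ * A i i) := by
    intro i
    have hterm : ∀ j, (A i j - μ * (if i = j then 1 else 0)) ^ 2
        = A i j ^ 2 + if i = j then μ ^ 2 - 2 * μ * A i j else 0 := by
      intro j
      split_ifs <;> ring
    simp only [hterm, Finset.sum_add_distrib, Finset.sum_ite_eq, Finset.mem_univ, if_true]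
  simp only [hrow, Finset.sum_add_distrib, Finset.sum_sub_distrib, Finset.sum_const,
    Finset.card_univ, nsmul_eq_mul, ← Finset.mul_sum]
  ring

section Spatial

variable {n : ℕ} {f g : (Fin n → ℝ) → ℝ} {x : Fin n → ℝ}

lemma pd_fun_sub (hf : DifferentiableAt ℝ f x) (hg : DifferentiableAt ℝ g x) (i : Fin n) :
    pd i (fun y => f y - g y) x = pd i f x - pd i g x := by
  simp [pd, fderiv_fun_sub hf hg]

lemma pd_sub_const (a : ℝ) (i : Fin n) : pd i (fun y => f y - a) x = pd i f x := by
  rw [pd, pd, fderiv_sub_const]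

lemma pd_const_mul (hf : DifferentiableAt ℝ f x) (a : ℝ) (i : Fin n) :
    pd i (fun y => a * f y) x = a * pd i f x := by
  simp [pd, fderiv_const_mul hf]

lemma pd_fun_mul (hf : DifferentiableAt ℝ f x) (hg : DifferentiableAt ℝ g x) (i : Fin n) :
    pd i (fun y => f y * g y) x = f x * pd i g x + g x * pd i f x := by
  simp [pd, fderiv_fun_mul hf hg]

lemma pd_fun_sum {ι : Type*} {s : Finset ι} {F : ι → (Fin n → ℝ) → ℝ}
    (hF : ∀ k ∈ s, DifferentiableAt ℝ (F k) x) (i : Fin n) :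
    pd i (fun y => ∑ k ∈ s, F k y) x = ∑ k ∈ s, pd i (F k) x := by
  simp [pd, fderiv_fun_sum hF]

lemma contDiff_pd {k : WithTop ℕ∞} (hf : ContDiff ℝ (k + 1) f) (i : Fin n) :
    ContDiff ℝ k (pd i f) :=
  (hf.fderiv_right le_rfl).clm_apply contDiff_const

lemma contDiff_lap {k : WithTop ℕ∞} (hf : ContDiff ℝ (k + 2) f) : ContDiff ℝ k (lap f) :=
  ContDiff.sum fun i _ => contDiff_pd (contDiff_pd (k := k + 1) (by rwa [add_assoc]) i) i

lemma contDiff_gradSq {k : WithTop ℕ∞} (hf : ContDiff ℝ (k + 1) f) : ContDiff ℝ k (gradSq f) :=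
  ContDiff.sum fun i _ => (contDiff_pd hf i).pow 2

lemma lap_fun_sub (hf : ContDiff ℝ 2 f) (hg : ContDiff ℝ 2 g) (x : Fin n → ℝ) :
    lap (fun y => f y - g y) x = lap f x - lap g x := by
  have hdf : ∀ i, Differentiable ℝ (pd i f) := fun i =>
    (contDiff_pd (k := 1) hf i).differentiable (by simp)
  have hdg : ∀ i, Differentiable ℝ (pd i g) := fun i =>
    (contDiff_pd (k := 1) hg i).differentiable (by simp)
  have hpd : ∀ i, pd i (fun y => f y - g y) = fun y => pd i f y - pd i g y := fun i =>
    funext fun y => pd_fun_sub (hf.differentiable (by simp) y) (hg.differentiable (by simp) y) i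
  simp only [lap, hpd, pd_fun_sub (hdf _ x) (hdg _ x), Finset.sum_sub_distrib]

lemma lap_const_mul (hf : ContDiff ℝ 2 f) (a : ℝ) (x : Fin n → ℝ) :
    lap (fun y => a * f y) x = a * lap f x := by
  have hpd : ∀ i, pd i (fun y => a * f y) = fun y => a * pd i f y := fun i =>
    funext fun y => pd_const_mul (hf.differentiable (by simp) y) a i
  simp only [lap, hpd, Finset.mul_sum,
    pd_const_mul ((contDiff_pd (k := 1) hf _).differentiable (by simp) x)]

lemma lap_sub_const (a : ℝ) (x : Fin n → ℝ) : lap (fun y => f y - a) x = lap f x := by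
  have hpd : ∀ i, pd i (fun y => f y - a) = pd i f := fun i => funext fun _ => pd_sub_const a i
  simp only [lap, hpd]

lemma hess_comm (hf : ContDiffAt ℝ 2 f x) (i j : Fin n) : hess i j f x = hess j i f x :=
  fderiv_fderiv_apply_comm hf _ _

lemma pd_hess_comm (hf : ContDiff ℝ 3 f) (i j : Fin n) :
    pd i (hess i j f) x = pd j (hess i i f) x := by
  have hij : hess i j f = pd j (pd i f) :=
    funext fun y => hess_comm (x := y) (hf.of_le (by norm_num)).contDiffAt i j
  rw [hij]
  exact hess_comm (contDiff_pd (k := 2) hf i).contDiffAt i j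

lemma pd_gradSq (hf : ContDiff ℝ 2 f) (i : Fin n) (y : Fin n → ℝ) :
    pd i (gradSq f) y = 2 * ∑ j, pd j f y * hess i j f y := by
  have hd : ∀ j, DifferentiableAt ℝ (pd j f) y :=
    fun j => (contDiff_pd (k := 1) hf j).differentiable (by simp) y
  change pd i (fun y => ∑ j, pd j f y ^ 2) y = _
  simp only [sq]
  rw [pd_fun_sum fun j _ => (hd j).fun_mul (hd j), Finset.mul_sum]
  refine Finset.sum_congr rfl fun j _ => ?_
  rw [pd_fun_mul (hd j) (hd j), hess]
  ring

lemma pd_lap (hf : ContDiff ℝ 3 f) (j : Fin n) :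
    pd j (lap f) x = ∑ i, pd j (hess i i f) x :=
  pd_fun_sum (fun i _ => (contDiff_pd (k := 1) (contDiff_pd (k := 2) hf i) i).differentiable
    (by simp) x) j

/-- Bochner's formula on flat space. -/
lemma lap_gradSq (hf : ContDiff ℝ 3 f) (x : Fin n → ℝ) :
    lap (gradSq f) x
      = 2 * ∑ i, ∑ j, hess i j f x ^ 2 + 2 * ∑ j, pd j f x * pd j (lap f) x := by
  have hd : ∀ j, DifferentiableAt ℝ (pd j f) x :=
    fun j => (contDiff_pd (k := 2) hf j).differentiable (by simp) x
  have hd2 : ∀ i j, DifferentiableAt ℝ (hess i j f) x :=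
    fun i j => (contDiff_pd (k := 1) (contDiff_pd (k := 2) hf j) i).differentiable (by simp) x
  have hterm : ∀ i, pd i (pd i (gradSq f)) x
      = 2 * ∑ j, (hess i j f x ^ 2 + pd j f x * pd j (hess i i f) x) := by
    intro i
    rw [funext (pd_gradSq (hf.of_le (by norm_num)) i),
      pd_const_mul (f := fun y => ∑ j, pd j f y * hess i j f y)
        (DifferentiableAt.fun_sum fun j _ => (hd j).fun_mul (hd2 i j)),
      pd_fun_sum fun j _ => (hd j).fun_mul (hd2 i j)]
    congr 1
    refine Finset.sum_congr rfl fun j _ => ?_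
    rw [pd_fun_mul (hd j) (hd2 i j), pd_hess_comm hf, hess]
    ring
  simp only [lap, hterm, pd_lap hf, Finset.mul_sum, mul_add, Finset.sum_add_distrib]
  congr 1
  exact Finset.sum_comm

def harnackQuantity (α β b c : ℝ) (u : ℝ → (Fin n → ℝ) → ℝ) (t : ℝ) (y : Fin n → ℝ) : ℝ :=
  α * lap (u t) y - β * gradSq (u t) y - b * u t y / t - c * n / t

section HarnackQuantity

variable {u : ℝ → (Fin n → ℝ) → ℝ} {t : ℝ} (α β b c : ℝ)

lemma harnackQuantity_eq :
    harnackQuantity α β b c u t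
      = fun y => α * lap (u t) y - β * gradSq (u t) y - b / t * u t y - c * n / t := by
  funext y
  simp only [harnackQuantity]
  ring

lemma pd_harnackQuantity (hu : ContDiff ℝ 3 (u t)) (i : Fin n) (y : Fin n → ℝ) :
    pd i (harnackQuantity α β b c u t) y
      = α * pd i (lap (u t)) y - β * pd i (gradSq (u t)) y - b / t * pd i (u t) y := by
  have hL := (contDiff_lap (k := 1) hu).differentiable (by simp) y
  have hQ := (contDiff_gradSq (k := 1) (hu.of_le (by norm_num))).differentiable (by simp) y
  have hu' := hu.differentiable (by simp) y
  rw [harnackQuantity_eq, pd_sub_const, pd_fun_sub (by fun_prop) (by fun_prop),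
    pd_fun_sub (by fun_prop) (by fun_prop), pd_const_mul hL, pd_const_mul hQ, pd_const_mul hu']

lemma sum_pd_harnackQuantity_mul (hu : ContDiff ℝ 3 (u t)) (x : Fin n → ℝ) :
    ∑ i, pd i (harnackQuantity α β b c u t) x * pd i (u t) x
      = α * ∑ i, pd i (u t) x * pd i (lap (u t)) x
        - β * ∑ i, pd i (u t) x * pd i (gradSq (u t)) x - b / t * gradSq (u t) x := by
  simp only [pd_harnackQuantity α β b c hu, gradSq, Finset.mul_sum, ← Finset.sum_sub_distrib]
  exact Finset.sum_congr rfl fun i _ => by ring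

lemma lap_harnackQuantity (hu : ContDiff ℝ 4 (u t)) (x : Fin n → ℝ) :
    lap (harnackQuantity α β b c u t) x
      = α * lap (lap (u t)) x - β * lap (gradSq (u t)) x - b / t * lap (u t) x := by
  have hL := contDiff_lap (k := 2) hu
  have hQ := contDiff_gradSq (k := 2) (hu.of_le (by norm_num))
  have hu' := hu.of_le (m := 2) (by norm_num)
  rw [harnackQuantity_eq, lap_sub_const, lap_fun_sub (by fun_prop) (by fun_prop),
    lap_fun_sub (by fun_prop) (by fun_prop), lap_const_mul hL, lap_const_mul hQ,
    lap_const_mul hu']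

end HarnackQuantity

end Spatial

section Time

variable {n : ℕ} {t : ℝ} {x : Fin n → ℝ}

def timeDeriv (G : ℝ → (Fin n → ℝ) → ℝ) (t : ℝ) (y : Fin n → ℝ) : ℝ :=
  deriv (fun s => G s y) t

lemma pd_slice {F : ℝ × (Fin n → ℝ) → ℝ} (hF : DifferentiableAt ℝ F (t, x)) (i : Fin n) :
    pd i (fun y => F (t, y)) x = fderiv ℝ F (t, x) (0, Pi.single i 1) := by
  have h := hF.hasFDerivAt.comp x ((hasFDerivAt_const t x).prodMk (hasFDerivAt_id x))
  rw [pd, show (fun y => F (t, y)) = F ∘ fun y => (t, y) from rfl, h.fderiv]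
  simp

lemma hasDerivAt_slice {F : ℝ × (Fin n → ℝ) → ℝ} (hF : DifferentiableAt ℝ F (t, x)) :
    HasDerivAt (fun s => F (s, x)) (fderiv ℝ F (t, x) (1, 0)) t :=
  hF.hasFDerivAt.comp_hasDerivAt t ((hasDerivAt_id t).prodMk (hasDerivAt_const t x))

variable {I : Set ℝ} {G : ℝ → (Fin n → ℝ) → ℝ}

lemma differentiableAt_uncurry (hG : ContDiffOn ℝ 1 (Function.uncurry G) (I ×ˢ univ))
    (hI : IsOpen I) (ht : t ∈ I) (y : Fin n → ℝ) :
    DifferentiableAt ℝ (Function.uncurry G) (t, y) :=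
  (hG.contDiffAt ((hI.prod isOpen_univ).mem_nhds ⟨ht, trivial⟩)).differentiableAt one_ne_zero

lemma contDiff_slice {k : WithTop ℕ∞} (hG : ContDiffOn ℝ k (Function.uncurry G) (I ×ˢ univ))
    (hI : IsOpen I) (ht : t ∈ I) : ContDiff ℝ k (G t) :=
  contDiff_iff_contDiffAt.2 fun y =>
    (hG.contDiffAt ((hI.prod isOpen_univ).mem_nhds ⟨ht, trivial⟩)).comp y
      (contDiff_const.prodMk contDiff_id).contDiffAt

lemma hasDerivAt_timeDeriv (hG : ContDiffOn ℝ 1 (Function.uncurry G) (I ×ˢ univ))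
    (hI : IsOpen I) (ht : t ∈ I) (x : Fin n → ℝ) :
    HasDerivAt (fun s => G s x) (timeDeriv G t x) t :=
  (hasDerivAt_slice (differentiableAt_uncurry hG hI ht x)).differentiableAt.hasDerivAt

lemma timeDeriv_eq_fderiv (hG : ContDiffOn ℝ 1 (Function.uncurry G) (I ×ˢ univ))
    (hI : IsOpen I) (ht : t ∈ I) (y : Fin n → ℝ) :
    timeDeriv G t y = fderiv ℝ (Function.uncurry G) (t, y) (1, 0) :=
  (hasDerivAt_slice (differentiableAt_uncurry hG hI ht y)).deriv

lemma pd_eq_fderiv (hG : ContDiffOn ℝ 1 (Function.uncurry G) (I ×ˢ univ))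
    (hI : IsOpen I) (ht : t ∈ I) (i : Fin n) (y : Fin n → ℝ) :
    pd i (G t) y = fderiv ℝ (Function.uncurry G) (t, y) (0, Pi.single i 1) :=
  pd_slice (differentiableAt_uncurry hG hI ht y) i

lemma contDiffOn_uncurry_pd {k : WithTop ℕ∞}
    (hG : ContDiffOn ℝ (k + 1) (Function.uncurry G) (I ×ˢ univ)) (hI : IsOpen I) (i : Fin n) :
    ContDiffOn ℝ k (Function.uncurry fun s => pd i (G s)) (I ×ˢ univ) :=
  ((hG.fderiv_of_isOpen (hI.prod isOpen_univ) le_rfl).clm_apply contDiffOn_const).congr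
    fun p hp => pd_eq_fderiv (hG.of_le le_add_self) hI hp.1 i p.2

lemma hasDerivAt_pd (hG : ContDiffOn ℝ 2 (Function.uncurry G) (I ×ˢ univ)) (hI : IsOpen I)
    (ht : t ∈ I) (i : Fin n) (x : Fin n → ℝ) :
    HasDerivAt (fun s => pd i (G s) x) (pd i (timeDeriv G t) x) t := by
  have hU := hI.prod (isOpen_univ (X := Fin n → ℝ))
  have hG1 : ContDiffOn ℝ 1 (Function.uncurry G) (I ×ˢ univ) := hG.of_le (by norm_num)
  have hDG : ContDiffOn ℝ 1 (fderiv ℝ (Function.uncurry G)) (I ×ˢ univ) :=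
    hG.fderiv_of_isOpen hU (by norm_num)
  have hnhds : I ×ˢ univ ∈ 𝓝 (t, x) := hU.mem_nhds ⟨ht, trivial⟩
  have hdiff : ∀ v, DifferentiableAt ℝ (fun p => fderiv ℝ (Function.uncurry G) p v) (t, x) :=
    fun v => ((hDG.clm_apply contDiffOn_const).contDiffAt hnhds).differentiableAt one_ne_zero
  have hslice := hasDerivAt_slice (hdiff (0, Pi.single i 1))
  rw [fderiv_fderiv_apply_comm (hG.contDiffAt hnhds), ← pd_slice (hdiff (1, 0)),
    ← funext (timeDeriv_eq_fderiv hG1 hI ht)] at hslice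
  refine hslice.congr_of_eventuallyEq ?_
  filter_upwards [hI.mem_nhds ht] with s hs using pd_eq_fderiv hG1 hI hs i x

lemma hasDerivAt_hess (hG : ContDiffOn ℝ 3 (Function.uncurry G) (I ×ˢ univ)) (hI : IsOpen I)
    (ht : t ∈ I) (i j : Fin n) (x : Fin n → ℝ) :
    HasDerivAt (fun s => hess i j (G s) x) (hess i j (timeDeriv G t) x) t := by
  have h := hasDerivAt_pd (contDiffOn_uncurry_pd (k := 2) hG hI j) hI ht i x
  rwa [show timeDeriv (fun s => pd j (G s)) t = pd j (timeDeriv G t) from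
    funext fun y => (hasDerivAt_pd (hG.of_le (by norm_num)) hI ht j y).deriv] at h

lemma hasDerivAt_lap (hG : ContDiffOn ℝ 3 (Function.uncurry G) (I ×ˢ univ)) (hI : IsOpen I)
    (ht : t ∈ I) (x : Fin n → ℝ) :
    HasDerivAt (fun s => lap (G s) x) (lap (timeDeriv G t) x) t :=
  HasDerivAt.fun_sum fun i _ => hasDerivAt_hess hG hI ht i i x

lemma hasDerivAt_gradSq (hG : ContDiffOn ℝ 2 (Function.uncurry G) (I ×ˢ univ))
    (hI : IsOpen I) (ht : t ∈ I) (x : Fin n → ℝ) :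
    HasDerivAt (fun s => gradSq (G s) x)
      (2 * ∑ i, pd i (G t) x * pd i (timeDeriv G t) x) t := by
  show HasDerivAt (fun s => ∑ i, pd i (G s) x ^ 2) _ t
  refine (HasDerivAt.fun_sum fun i _ => (hasDerivAt_pd hG hI ht i x).pow 2).congr_deriv ?_
  rw [Finset.mul_sum]
  exact Finset.sum_congr rfl fun i _ => by push_cast; ring

end Time

lemma hasDerivAt_harnackQuantity {n : ℕ} {I : Set ℝ} {u : ℝ → (Fin n → ℝ) → ℝ} {t : ℝ}
    (hu : ContDiffOn ℝ 3 (Function.uncurry u) (I ×ˢ univ)) (hI : IsOpen I) (ht : t ∈ I)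
    (ht0 : t ≠ 0) (α β b c : ℝ) (x : Fin n → ℝ) :
    HasDerivAt (fun s => harnackQuantity α β b c u s x)
      (α * lap (timeDeriv u t) x - β * (2 * ∑ i, pd i (u t) x * pd i (timeDeriv u t) x)
        - b * (timeDeriv u t x * t - u t x) / t ^ 2 + c * n / t ^ 2) t := by
  have hu2 : ContDiffOn ℝ 2 (Function.uncurry u) (I ×ˢ univ) := hu.of_le (by norm_num)
  have hu1 : ContDiffOn ℝ 1 (Function.uncurry u) (I ×ˢ univ) := hu.of_le (by norm_num)
  refine ((((hasDerivAt_lap hu hI ht x).const_mul α).sub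
    ((hasDerivAt_gradSq hu2 hI ht x).const_mul β)).sub
    (((hasDerivAt_timeDeriv hu1 hI ht x).const_mul b).div (hasDerivAt_id' t) ht0)).sub
    ((hasDerivAt_const t (c * n)).div (hasDerivAt_id' t) ht0) |>.congr_deriv ?_
  ring

theorem evolution_H_general_general
    (n : ℕ) (u : ℝ → (Fin n → ℝ) → ℝ)
    (hsmooth : ContDiffOn ℝ (⊤ : ℕ∞) (fun p : ℝ × (Fin n → ℝ) => u p.1 p.2)
      (Set.Ioi 0 ×ˢ Set.univ))
    (heq : ∀ t > (0:ℝ), ∀ x : Fin n → ℝ,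
      deriv (fun s => u s x) t = lap (u t) x - gradSq (u t) x)
    (α β b c l : ℝ) (hα : α ≠ 0)
    (H : ℝ → (Fin n → ℝ) → ℝ)
    (hH : ∀ t x, H t x = α * lap (u t) x - β * gradSq (u t) x - b * u t x / t - c * n / t) :
    ∀ t > (0:ℝ), ∀ x : Fin n → ℝ,
      deriv (fun s => H s x) t =
        lap (H t) x - 2 * (∑ i, pd i (H t) x * pd i (u t) x)
        - 2 * (α - β) *
            (∑ i, ∑ j, (hess i j (u t) x - (l / (2 * t)) * (if i = j then (1:ℝ) else 0)) ^ 2)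
        - (2 * (α - β) / α) * (l / t) * H t x
        - (b + 2 * (α - β) * β * l / α) * (gradSq (u t) x / t)
        + (1 - 2 * (α - β) * l / α) * (b * u t x / t ^ 2)
        + (1 - 2 * (α - β) * l / α) * (c * n / t ^ 2)
        + (α - β) * n * l ^ 2 / (2 * t ^ 2) := by
  intro t ht x
  obtain rfl : H = harnackQuantity α β b c u := funext₂ hH
  have hu : ContDiffOn ℝ 4 (Function.uncurry u) (Ioi 0 ×ˢ univ) :=
    hsmooth.of_le (by norm_cast)
  have hut : ContDiff ℝ 4 (u t) := contDiff_slice hu isOpen_Ioi ht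
  have hL := contDiff_lap (k := 2) hut
  have hQ := contDiff_gradSq (k := 2) (hut.of_le (by norm_num))
  have hsol : timeDeriv u t = fun y => lap (u t) y - gradSq (u t) y := funext (heq t ht)
  rw [(hasDerivAt_harnackQuantity (hu.of_le (by norm_num)) isOpen_Ioi ht ht.ne' α β b c x).deriv,
    hsol, lap_fun_sub hL hQ, lap_harnackQuantity α β b c hut,
    sum_pd_harnackQuantity_mul α β b c (hut.of_le (by norm_num)),
    lap_gradSq (hut.of_le (by norm_num)), sum_sum_sq_sub_mul_ite,
    show ∑ i, hess i i (u t) x = lap (u t) x from rfl]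
  simp only [pd_fun_sub (hL.differentiable (by simp) x) (hQ.differentiable (by simp) x), mul_sub,
    Finset.sum_sub_distrib, harnackQuantity, Fintype.card_fin]
  field_simp
  ring

/-- Lemma 2.1: general evolution equation for `H = αΔu − β|∇u|² − b·u/t − c·n/t` when
`∂u/∂t = Δu − |∇u|²` on flat space. -/
theorem evolution_H_general
    (n : ℕ) (hn : 1 ≤ n) (u : ℝ → (Fin n → ℝ) → ℝ)
    (hsmooth : ContDiffOn ℝ (⊤ : ℕ∞) (fun p : ℝ × (Fin n → ℝ) => u p.1 p.2)
      (Set.Ioi 0 ×ˢ Set.univ))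
    (heq : ∀ t > (0:ℝ), ∀ x : Fin n → ℝ,
      deriv (fun s => u s x) t = lap (u t) x - gradSq (u t) x)
    (α β b c l : ℝ) (hα : α ≠ 0)
    (H : ℝ → (Fin n → ℝ) → ℝ)
    (hH : ∀ t x, H t x = α * lap (u t) x - β * gradSq (u t) x - b * u t x / t - c * n / t) :
    ∀ t > (0:ℝ), ∀ x : Fin n → ℝ,
      deriv (fun s => H s x) t =
        lap (H t) x - 2 * (∑ i, pd i (H t) x * pd i (u t) x)
        - 2 * (α - β) *
            (∑ i, ∑ j, (hess i j (u t) x - (l / (2 * t)) * (if i = j then (1:ℝ) else 0)) ^ 2)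
        - (2 * (α - β) / α) * (l / t) * H t x
        - (b + 2 * (α - β) * β * l / α) * (gradSq (u t) x / t)
        + (1 - 2 * (α - β) * l / α) * (b * u t x / t ^ 2)
        + (1 - 2 * (α - β) * l / α) * (c * n / t ^ 2)
        + (α - β) * n * l ^ 2 / (2 * t ^ 2) :=
  evolution_H_general_general n u hsmooth heq α β b c l hα H hH
end
end

section
/- Let n ≥ 1 and let f : (0,∞) × ℝⁿ → ℝ be a smooth positive solution of the heat equation ∂f/∂t = Δf that is ℤⁿ-periodic in the space variable. Let 0 < t₁ < t₂, let x₁, x₂ ∈ ℝⁿ, and let γ : [t₁, t₂] → ℝⁿ be any C¹ path with γ(t₁) = x₁ and γ(t₂) = x₂. Then f(t₁, x₁) ≤ f(t₂, x₂) · (t₂/t₁)ⁿ · exp( (1/2) ∫_{t₁}^{t₂} |γ'(t)|² dt ). -/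
/-!
Li–Yau's argument. Put `Q = log f` and `W = ½|∇Q|² - ∂ₜQ`. Then `∂ₜQ = ΔQ + |∇Q|²`, and
differentiating this equation gives `(∂ₜ - Δ - 2 ∇Q·∇) W = -|∇²Q|²`, while `ΔQ = -W - ½|∇Q|²`
and Cauchy–Schwarz give `|∇²Q|² ≥ W² / n` wherever `W ≥ 0`. For `0 < a < T`, periodicity lets
`(t - a) W` attain its maximum over the slab `[a, T] × ℝⁿ`; at a positive maximum `∇W = 0`,
`ΔW ≤ 0` and `W + (t - a) ∂ₜW ≥ 0`, which together force `(t - a) W ≤ n`. Letting `a → 0` gives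
`t W ≤ n`. Along the path, `d/dt Q(t, γ t) = ∂ₜQ + γ'·∇Q ≥ -n/t - ½|γ'|²`, since
`γ'·∇Q ≥ -½|γ'|² - ½|∇Q|²`; integrating from `t₁` to `t₂` and exponentiating gives the claim.
-/

open MeasureTheory Real

noncomputable section

open Filter Topology

section DirDeriv

variable {E : Type*} [NormedAddCommGroup E] [NormedSpace ℝ E]

def dirDeriv (v : E) (g : E → ℝ) (p : E) : ℝ := fderiv ℝ g p v

variable {g h : E → ℝ} {p v w : E}

lemma ContDiffAt.dirDeriv (hg : ContDiffAt ℝ (⊤ : ℕ∞) g p) (v : E) :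
    ContDiffAt ℝ (⊤ : ℕ∞) (dirDeriv v g) p :=
  (hg.fderiv_right (m := (⊤ : ℕ∞)) le_rfl).clm_apply contDiffAt_const

lemma Filter.EventuallyEq.dirDeriv_eq (hgh : g =ᶠ[𝓝 p] h) (v : E) :
    dirDeriv v g p = dirDeriv v h p := by
  rw [dirDeriv, dirDeriv, hgh.fderiv_eq]

lemma dirDeriv_dirDeriv (hg : DifferentiableAt ℝ (fderiv ℝ g) p) :
    dirDeriv w (dirDeriv v g) p = fderiv ℝ (fderiv ℝ g) p w v := by
  have : HasFDerivAt (fun q => fderiv ℝ g q v)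
      ((ContinuousLinearMap.apply ℝ ℝ v).comp (fderiv ℝ (fderiv ℝ g) p)) p :=
    (ContinuousLinearMap.apply ℝ ℝ v).hasFDerivAt.comp p hg.hasFDerivAt
  exact congrArg (· w) this.fderiv

lemma dirDeriv_comm (hg : ContDiffAt ℝ 2 g p) (v w : E) :
    dirDeriv v (dirDeriv w g) p = dirDeriv w (dirDeriv v g) p := by
  have hd : DifferentiableAt ℝ (fderiv ℝ g) p :=
    (hg.fderiv_right (m := 1) le_rfl).differentiableAt one_ne_zero
  rw [dirDeriv_dirDeriv hd, dirDeriv_dirDeriv hd]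
  exact (hg.isSymmSndFDerivAt (by simp [minSmoothness_of_isRCLikeNormedField])) v w

lemma dirDeriv_add (hg : DifferentiableAt ℝ g p) (hh : DifferentiableAt ℝ h p) :
    dirDeriv v (fun q => g q + h q) p = dirDeriv v g p + dirDeriv v h p := by
  simp [dirDeriv, fderiv_fun_add hg hh]

lemma dirDeriv_sub (hg : DifferentiableAt ℝ g p) (hh : DifferentiableAt ℝ h p) :
    dirDeriv v (fun q => g q - h q) p = dirDeriv v g p - dirDeriv v h p := by
  simp [dirDeriv, fderiv_fun_sub hg hh]

lemma dirDeriv_mul (hg : DifferentiableAt ℝ g p) (hh : DifferentiableAt ℝ h p) :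
    dirDeriv v (fun q => g q * h q) p = dirDeriv v g p * h p + g p * dirDeriv v h p := by
  simp only [dirDeriv, fderiv_fun_mul hg hh, add_apply,
    smul_apply, smul_eq_mul]
  ring

lemma dirDeriv_const_mul (hg : DifferentiableAt ℝ g p) (c : ℝ) :
    dirDeriv v (fun q => c * g q) p = c * dirDeriv v g p := by
  simp [dirDeriv, fderiv_const_mul hg c]

lemma dirDeriv_sq (hg : DifferentiableAt ℝ g p) :
    dirDeriv v (fun q => g q ^ 2) p = 2 * g p * dirDeriv v g p := by
  simp only [sq, dirDeriv_mul hg hg]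
  ring

lemma dirDeriv_sum {ι : Type*} {s : Finset ι} {G : ι → E → ℝ}
    (hG : ∀ i ∈ s, DifferentiableAt ℝ (G i) p) :
    dirDeriv v (fun q => ∑ i ∈ s, G i q) p = ∑ i ∈ s, dirDeriv v (G i) p := by
  simp [dirDeriv, fderiv_fun_sum hG]

lemma dirDeriv_log (hg : DifferentiableAt ℝ g p) (hp : g p ≠ 0) :
    dirDeriv v (fun q => Real.log (g q)) p = dirDeriv v g p / g p := by
  simp only [dirDeriv, fderiv.log hg hp, smul_apply, smul_eq_mul]
  ring

lemma dirDeriv_inv (hg : DifferentiableAt ℝ g p) (hp : g p ≠ 0) :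
    dirDeriv v (fun q => (g q)⁻¹) p = -dirDeriv v g p / g p ^ 2 := by
  have := ((hasDerivAt_inv hp).comp_hasFDerivAt p hg.hasFDerivAt).fderiv
  simp only [Function.comp_def] at this
  simp only [dirDeriv, this, neg_smul, neg_apply,
    smul_apply, smul_eq_mul]
  ring

lemma dirDeriv_div (hg : DifferentiableAt ℝ g p) (hh : DifferentiableAt ℝ h p) (hp : h p ≠ 0) :
    dirDeriv v (fun q => g q / h q) p
      = (dirDeriv v g p * h p - g p * dirDeriv v h p) / h p ^ 2 := by
  simp only [div_eq_mul_inv]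
  rw [dirDeriv_mul hg (hh.fun_inv hp), dirDeriv_inv hh hp]
  field_simp
  ring

lemma HasDerivAt.comp_dirDeriv {c : ℝ → E} {c' : E} {t : ℝ} (hg : DifferentiableAt ℝ g (c t))
    (hc : HasDerivAt c c' t) : HasDerivAt (fun s => g (c s)) (dirDeriv c' g (c t)) t :=
  hg.hasFDerivAt.comp_hasDerivAt t hc

lemma hasDerivAt_dirDeriv_line {s : ℝ} (hg : DifferentiableAt ℝ g (p + s • v)) :
    HasDerivAt (fun s : ℝ => g (p + s • v)) (dirDeriv v g (p + s • v)) s :=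
  HasDerivAt.comp_dirDeriv hg (by simpa using ((hasDerivAt_id s).smul_const v).const_add p)

end DirDeriv

lemma HasDerivAt.nonneg_of_isMaxOn_Icc {ψ : ℝ → ℝ} {d a t : ℝ} (hψ : HasDerivAt ψ d t)
    (hmax : IsMaxOn ψ (Set.Icc a t) t) (hat : a < t) : 0 ≤ d := by
  have hloc : IsLocalMaxOn ψ (Set.Iic t) t := mem_of_superset (Icc_mem_nhdsLE hat) hmax
  have hcone : (-1 : ℝ) ∈ posTangentConeAt (Set.Iic t) t := by
    apply mem_posTangentConeAt_of_segment_subset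
    rw [segment_symm, segment_eq_Icc (by linarith)]
    exact fun s hs => hs.2
  simpa using hloc.hasFDerivWithinAt_nonpos hψ.hasFDerivAt.hasFDerivWithinAt hcone

-- Were `f'' x > 0`, the second-derivative test would make `x` also a local minimum, so `f` would
-- be locally constant and `f'' x = 0`.
lemma IsLocalMax.deriv_deriv_nonpos {f : ℝ → ℝ} {x : ℝ} (h : IsLocalMax f x)
    (hc : ContinuousAt f x) : deriv (deriv f) x ≤ 0 := by
  by_contra! hpos
  have hmin := isLocalMin_of_deriv_deriv_pos hpos h.deriv_eq_zero hc
  have hconst : f =ᶠ[𝓝 x] fun _ => f x := (h.and hmin).mono fun y hy => le_antisymm hy.1 hy.2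
  rw [hconst.deriv.deriv_eq, deriv_const', deriv_const] at hpos
  exact lt_irrefl 0 hpos

section LocalMax

variable {E : Type*} [NormedAddCommGroup E] [NormedSpace ℝ E] {g : E → ℝ} {p v : E}

lemma IsLocalMax.dirDeriv_eq_zero (hmax : IsLocalMax (fun s : ℝ => g (p + s • v)) 0)
    (hg : DifferentiableAt ℝ g p) : dirDeriv v g p = 0 :=
  hmax.hasDerivAt_eq_zero <| by
    simpa using hasDerivAt_dirDeriv_line (p := p) (v := v) (s := 0) (by simpa using hg)

lemma IsLocalMax.dirDeriv_dirDeriv_nonpos (hmax : IsLocalMax (fun s : ℝ => g (p + s • v)) 0)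
    (hg : ContDiffAt ℝ 2 g p) : dirDeriv v (dirDeriv v g) p ≤ 0 := by
  have hline : Tendsto (fun s : ℝ => p + s • v) (𝓝 0) (𝓝 p) := by
    have : Continuous fun s : ℝ => p + s • v := by fun_prop
    exact this.tendsto' 0 p (by simp)
  have hfirst : ∀ᶠ s in 𝓝 (0 : ℝ),
      HasDerivAt (fun s : ℝ => g (p + s • v)) (dirDeriv v g (p + s • v)) s :=
    hline.eventually ((hg.eventually (by simp)).mono fun q hq => hq.differentiableAt two_ne_zero)
      |>.mono fun s hs => hasDerivAt_dirDeriv_line hs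
  have hsecond : HasDerivAt (fun s : ℝ => dirDeriv v g (p + s • v))
      (dirDeriv v (dirDeriv v g) p) 0 := by
    have hd : DifferentiableAt ℝ (dirDeriv v g) p :=
      ((hg.fderiv_right (m := 1) le_rfl).clm_apply contDiffAt_const).differentiableAt one_ne_zero
    simpa using hasDerivAt_dirDeriv_line (p := p) (v := v) (s := 0) (by simpa using hd)
  have hderiv : deriv (fun s : ℝ => g (p + s • v)) =ᶠ[𝓝 0] fun s => dirDeriv v g (p + s • v) :=
    hfirst.mono fun s hs => hs.deriv
  rw [← hsecond.deriv, ← hderiv.deriv_eq]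
  exact hmax.deriv_deriv_nonpos hfirst.self_of_nhds.continuousAt

end LocalMax

section SpaceTime

variable {n : ℕ}

def posTime (n : ℕ) : Set (ℝ × (Fin n → ℝ)) := Set.Ioi 0 ×ˢ Set.univ

lemma mem_posTime {p : ℝ × (Fin n → ℝ)} : p ∈ posTime n ↔ 0 < p.1 := by
  simp [posTime]

lemma posTime_mem_nhds {p : ℝ × (Fin n → ℝ)} (hp : p ∈ posTime n) : posTime n ∈ 𝓝 p :=
  (isOpen_Ioi.prod isOpen_univ).mem_nhds hp

def timeDir (n : ℕ) : ℝ × (Fin n → ℝ) := (1, 0)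

def spaceDir (i : Fin n) : ℝ × (Fin n → ℝ) := (0, Pi.single i 1)

notation "∂ₜ" => dirDeriv (timeDir _)

notation "∂ₓ[" i "]" => dirDeriv (spaceDir i)

structure SmoothPeriodic (g : ℝ × (Fin n → ℝ) → ℝ) : Prop where
  contDiffAt : ∀ p ∈ posTime n, ContDiffAt ℝ (⊤ : ℕ∞) g p
  periodic : ∀ p ∈ posTime n, ∀ m : Fin n → ℤ, g (p + (0, fun i => (m i : ℝ))) = g p

namespace SmoothPeriodic

variable {g : ℝ × (Fin n → ℝ) → ℝ} {p : ℝ × (Fin n → ℝ)}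

lemma contDiffAt_two (hg : SmoothPeriodic g) (hp : p ∈ posTime n) : ContDiffAt ℝ 2 g p :=
  (hg.contDiffAt p hp).of_le (by norm_cast)

lemma differentiableAt (hg : SmoothPeriodic g) (hp : p ∈ posTime n) : DifferentiableAt ℝ g p :=
  (hg.contDiffAt p hp).differentiableAt (by simp)

lemma dirDeriv_comm (hg : SmoothPeriodic g) (hp : p ∈ posTime n) (v w : ℝ × (Fin n → ℝ)) :
    dirDeriv v (dirDeriv w g) p = dirDeriv w (dirDeriv v g) p :=
  _root_.dirDeriv_comm (hg.contDiffAt_two hp) v w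

lemma dirDeriv_dirDeriv_comm (hg : SmoothPeriodic g) (hp : p ∈ posTime n)
    (u v w : ℝ × (Fin n → ℝ)) :
    dirDeriv u (dirDeriv v (dirDeriv w g)) p = dirDeriv u (dirDeriv w (dirDeriv v g)) p :=
  (Filter.eventuallyEq_of_mem (posTime_mem_nhds hp) fun _ hq => hg.dirDeriv_comm hq v w).dirDeriv_eq
    u

lemma dirDeriv (hg : SmoothPeriodic g) (v : ℝ × (Fin n → ℝ)) : SmoothPeriodic (dirDeriv v g) where
  contDiffAt p hp := (hg.contDiffAt p hp).dirDeriv v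
  periodic p hp m := by
    have hshift : (fun q => g (q + (0, fun i => (m i : ℝ)))) =ᶠ[𝓝 p] g :=
      Filter.eventuallyEq_of_mem (posTime_mem_nhds hp) fun q hq => hg.periodic q hq m
    simp only [_root_.dirDeriv, ← fderiv_comp_add_right, hshift.fderiv_eq]

lemma log (hg : SmoothPeriodic g) (hpos : ∀ p ∈ posTime n, 0 < g p) :
    SmoothPeriodic fun p => Real.log (g p) where
  contDiffAt p hp := (hg.contDiffAt p hp).log (hpos p hp).ne'
  periodic p hp m := by rw [hg.periodic p hp m]

end SmoothPeriodic

lemma hasDerivAt_timeSlice {g : ℝ × (Fin n → ℝ) → ℝ} {t : ℝ} {x : Fin n → ℝ}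
    (hg : DifferentiableAt ℝ g (t, x)) : HasDerivAt (fun s => g (s, x)) (∂ₜ g (t, x)) t :=
  HasDerivAt.comp_dirDeriv hg ((hasDerivAt_id t).prodMk (hasDerivAt_const t x))

lemma pd_spaceSlice {g : ℝ × (Fin n → ℝ) → ℝ} {t : ℝ} {x : Fin n → ℝ}
    (hg : DifferentiableAt ℝ g (t, x)) (i : Fin n) :
    pd i (fun y => g (t, y)) x = ∂ₓ[i] g (t, x) := by
  have hslice : HasFDerivAt (fun y : Fin n → ℝ => (t, y))
      (ContinuousLinearMap.inr ℝ ℝ (Fin n → ℝ)) x :=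
    (hasFDerivAt_const t x).prodMk (hasFDerivAt_id x)
  rw [pd, show (fun y => g (t, y)) = g ∘ fun y => (t, y) from rfl,
    (hg.hasFDerivAt.comp x hslice).fderiv]
  simp [dirDeriv, spaceDir]

end SpaceTime

-- The evolution of `W` in coordinates: `r = ∇Q`, `A = ∇²Q`, `T j i = ∂ⱼ∂ⱼ∂ᵢQ`, `B = ∂ₜ∇Q` and
-- `C i = ∂ₜ∂ᵢ∂ᵢQ`; `hB` is the gradient of the equation for `Q`.
lemma sum_bochner_identity {ι : Type*} [Fintype ι] (r B C : ι → ℝ) (A T : ι → ι → ℝ)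
    (hB : ∀ i, B i = ∑ j, T j i + 2 * ∑ j, r j * A i j) :
    (∑ i, r i * B i - (∑ i, C i + ∑ i, 2 * r i * B i))
      - ∑ j, (∑ i, (A j i ^ 2 + r i * T j i) - C j)
      - 2 * ∑ j, r j * (∑ i, r i * A j i - B j)
      = -∑ i, ∑ j, A i j ^ 2 := by
  have hrB : ∑ i, r i * B i = ∑ j, ∑ i, r i * T j i + 2 * ∑ j, r j * ∑ i, r i * A j i := by
    simp only [hB, mul_add, Finset.sum_add_distrib, Finset.mul_sum]
    rw [Finset.sum_comm]
    congr 1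
    exact Finset.sum_congr rfl fun i _ => Finset.sum_congr rfl fun j _ => by ring
  simp only [mul_sub, Finset.sum_sub_distrib, Finset.sum_add_distrib, ← Finset.mul_sum, mul_assoc]
  linarith

section LiYauQuantity

variable {n : ℕ} {Q : ℝ × (Fin n → ℝ) → ℝ} {p : ℝ × (Fin n → ℝ)}

def liYauQuantity (Q : ℝ × (Fin n → ℝ) → ℝ) (p : ℝ × (Fin n → ℝ)) : ℝ :=
  (1 / 2) * ∑ i, ∂ₓ[i] Q p ^ 2 - ∂ₜ Q p

def IsLogHeatSolution (Q : ℝ × (Fin n → ℝ) → ℝ) : Prop :=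
  ∀ p ∈ posTime n, ∂ₜ Q p = ∑ i, ∂ₓ[i] (∂ₓ[i] Q) p + ∑ i, ∂ₓ[i] Q p ^ 2

lemma SmoothPeriodic.liYauQuantity (hQ : SmoothPeriodic Q) : SmoothPeriodic (liYauQuantity Q) where
  contDiffAt p hp := contDiffAt_const.mul
    (ContDiffAt.sum fun i _ => ((hQ.dirDeriv _).contDiffAt p hp).pow 2)
    |>.sub ((hQ.dirDeriv _).contDiffAt p hp)
  periodic p hp m := by
    simp only [_root_.liYauQuantity, (hQ.dirDeriv _).periodic p hp m]

lemma dirDeriv_liYauQuantity (hQ : SmoothPeriodic Q) (hp : p ∈ posTime n)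
    (v : ℝ × (Fin n → ℝ)) :
    dirDeriv v (liYauQuantity Q) p
      = ∑ i, ∂ₓ[i] Q p * dirDeriv v (∂ₓ[i] Q) p - dirDeriv v (∂ₜ Q) p := by
  have hd : ∀ i, DifferentiableAt ℝ (∂ₓ[i] Q) p := fun i => (hQ.dirDeriv _).differentiableAt hp
  have hsum : DifferentiableAt ℝ (fun q => ∑ i, ∂ₓ[i] Q q ^ 2) p :=
    DifferentiableAt.fun_sum fun i _ => (hd i).fun_pow 2
  unfold liYauQuantity
  rw [dirDeriv_sub (hsum.const_mul _) ((hQ.dirDeriv _).differentiableAt hp),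
    dirDeriv_const_mul hsum, dirDeriv_sum fun i _ => (hd i).fun_pow 2, Finset.mul_sum]
  simp only [dirDeriv_sq (hd _)]
  congr 1
  exact Finset.sum_congr rfl fun i _ => by ring

lemma dirDeriv_dirDeriv_liYauQuantity (hQ : SmoothPeriodic Q) (hp : p ∈ posTime n)
    (v w : ℝ × (Fin n → ℝ)) :
    dirDeriv w (dirDeriv v (liYauQuantity Q)) p
      = ∑ i, (dirDeriv w (∂ₓ[i] Q) p * dirDeriv v (∂ₓ[i] Q) p
          + ∂ₓ[i] Q p * dirDeriv w (dirDeriv v (∂ₓ[i] Q)) p)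
        - dirDeriv w (dirDeriv v (∂ₜ Q)) p := by
  have hd : ∀ i, DifferentiableAt ℝ (∂ₓ[i] Q) p := fun i => (hQ.dirDeriv _).differentiableAt hp
  have hdv : ∀ i, DifferentiableAt ℝ (dirDeriv v (∂ₓ[i] Q)) p :=
    fun i => ((hQ.dirDeriv _).dirDeriv v).differentiableAt hp
  have hprod : ∀ i, DifferentiableAt ℝ (fun q => ∂ₓ[i] Q q * dirDeriv v (∂ₓ[i] Q) q) p :=
    fun i => (hd i).mul (hdv i)
  rw [(Filter.eventuallyEq_of_mem (posTime_mem_nhds hp)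
      fun q hq => dirDeriv_liYauQuantity hQ hq v).dirDeriv_eq w,
    dirDeriv_sub (DifferentiableAt.fun_sum fun i _ => hprod i)
      (((hQ.dirDeriv _).dirDeriv v).differentiableAt hp),
    dirDeriv_sum fun i _ => hprod i]
  simp only [dirDeriv_mul (hd _) (hdv _)]

lemma IsLogHeatSolution.dirDeriv_timeDeriv (hheat : IsLogHeatSolution Q) (hQ : SmoothPeriodic Q)
    (hp : p ∈ posTime n) (v : ℝ × (Fin n → ℝ)) :
    dirDeriv v (∂ₜ Q) p = ∑ i, dirDeriv v (∂ₓ[i] (∂ₓ[i] Q)) p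
      + ∑ i, 2 * ∂ₓ[i] Q p * dirDeriv v (∂ₓ[i] Q) p := by
  have hd : ∀ i, DifferentiableAt ℝ (∂ₓ[i] Q) p := fun i => (hQ.dirDeriv _).differentiableAt hp
  have hdd : ∀ i, DifferentiableAt ℝ (∂ₓ[i] (∂ₓ[i] Q)) p :=
    fun i => ((hQ.dirDeriv _).dirDeriv _).differentiableAt hp
  rw [(Filter.eventuallyEq_of_mem (posTime_mem_nhds hp) hheat).dirDeriv_eq v,
    dirDeriv_add (DifferentiableAt.fun_sum fun i _ => hdd i)
      (DifferentiableAt.fun_sum fun i _ => (hd i).fun_pow 2),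
    dirDeriv_sum fun i _ => hdd i, dirDeriv_sum fun i _ => (hd i).fun_pow 2]
  simp only [dirDeriv_sq (hd _)]

theorem liYauQuantity_evolution (hQ : SmoothPeriodic Q) (hheat : IsLogHeatSolution Q)
    (hp : p ∈ posTime n) :
    ∂ₜ (liYauQuantity Q) p - ∑ j, ∂ₓ[j] (∂ₓ[j] (liYauQuantity Q)) p
      - 2 * ∑ j, ∂ₓ[j] Q p * ∂ₓ[j] (liYauQuantity Q) p
      = -∑ i, ∑ j, ∂ₓ[i] (∂ₓ[j] Q) p ^ 2 := by
  have hB : ∀ i, ∂ₜ (∂ₓ[i] Q) p = ∑ j, ∂ₓ[j] (∂ₓ[j] (∂ₓ[i] Q)) p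
      + 2 * ∑ j, ∂ₓ[j] Q p * ∂ₓ[i] (∂ₓ[j] Q) p := by
    intro i
    rw [← hQ.dirDeriv_comm hp, hheat.dirDeriv_timeDeriv hQ hp, Finset.mul_sum]
    congr 1
    · refine Finset.sum_congr rfl fun j _ => ?_
      rw [(hQ.dirDeriv _).dirDeriv_comm hp, hQ.dirDeriv_dirDeriv_comm hp]
    · exact Finset.sum_congr rfl fun j _ => by ring
  have hC : ∀ j, ∂ₓ[j] (∂ₓ[j] (∂ₜ Q)) p = ∂ₜ (∂ₓ[j] (∂ₓ[j] Q)) p := by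
    intro j
    rw [hQ.dirDeriv_dirDeriv_comm hp, (hQ.dirDeriv _).dirDeriv_comm hp]
  have hD : ∀ j, ∂ₓ[j] (∂ₜ Q) p = ∂ₜ (∂ₓ[j] Q) p := fun j => hQ.dirDeriv_comm hp _ _
  simp only [dirDeriv_liYauQuantity hQ hp, dirDeriv_dirDeriv_liYauQuantity hQ hp,
    hheat.dirDeriv_timeDeriv hQ hp (timeDir n), hC, hD, ← sq]
  exact sum_bochner_identity _ _ _ _ _ hB

end LiYauQuantity

section MaximumPrinciple

variable {n : ℕ} {Q : ℝ × (Fin n → ℝ) → ℝ}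

lemma exists_isMaxOn_slab {g : ℝ × (Fin n → ℝ) → ℝ} {a T : ℝ} (haT : a ≤ T)
    (hc : ContinuousOn g (Set.Icc a T ×ˢ Set.univ))
    (hper : ∀ q ∈ Set.Icc a T ×ˢ Set.univ, ∀ m : Fin n → ℤ,
      g (q + (0, fun i => (m i : ℝ))) = g q) :
    ∃ p₀ ∈ Set.Icc a T ×ˢ Set.univ, IsMaxOn g (Set.Icc a T ×ˢ Set.univ) p₀ := by
  have hK : Set.Icc (a, (0 : Fin n → ℝ)) (T, 1) ⊆ Set.Icc a T ×ˢ Set.univ :=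
    fun q hq => ⟨⟨(Prod.mk_le_mk.mp hq.1).1, (Prod.mk_le_mk.mp hq.2).1⟩, trivial⟩
  obtain ⟨p₀, hp₀, hmax⟩ := isCompact_Icc.exists_isMaxOn
    (Set.nonempty_Icc.mpr (Prod.mk_le_mk.mpr ⟨haT, zero_le_one⟩)) (hc.mono hK)
  refine ⟨p₀, hK hp₀, fun q hq => ?_⟩
  have hq' : (q.1, fun i => Int.fract (q.2 i)) + (0, fun i => ((⌊q.2 i⌋ : ℤ) : ℝ)) = q := by
    ext <;> simp [Int.fract_add_floor]
  rw [← hq', Set.mem_ofPred_eq, hper (q.1, fun i => Int.fract (q.2 i)) ⟨hq.1, trivial⟩]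
  exact hmax ⟨Prod.mk_le_mk.mpr ⟨hq.1.1, fun i => Int.fract_nonneg _⟩,
    Prod.mk_le_mk.mpr ⟨hq.1.2, fun i => (Int.fract_lt_one _).le⟩⟩

lemma sq_liYauQuantity_le (hheat : IsLogHeatSolution Q) {p : ℝ × (Fin n → ℝ)}
    (hp : p ∈ posTime n) (hW : 0 ≤ liYauQuantity Q p) :
    liYauQuantity Q p ^ 2 ≤ n * ∑ i, ∑ j, ∂ₓ[i] (∂ₓ[j] Q) p ^ 2 := by
  have htrace : ∑ i, ∂ₓ[i] (∂ₓ[i] Q) p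
      = -liYauQuantity Q p - (1 / 2) * ∑ i, ∂ₓ[i] Q p ^ 2 := by
    rw [liYauQuantity, hheat p hp]
    ring
  have hgrad : 0 ≤ ∑ i, ∂ₓ[i] Q p ^ 2 := Finset.sum_nonneg fun i _ => sq_nonneg _
  calc liYauQuantity Q p ^ 2 ≤ (∑ i, ∂ₓ[i] (∂ₓ[i] Q) p) ^ 2 := by
        rw [htrace]
        nlinarith
    _ ≤ n * ∑ i, ∂ₓ[i] (∂ₓ[i] Q) p ^ 2 := by
        simpa using sq_sum_le_card_mul_sum_sq (s := Finset.univ)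
          (f := fun i => ∂ₓ[i] (∂ₓ[i] Q) p)
    _ ≤ n * ∑ i, ∑ j, ∂ₓ[i] (∂ₓ[j] Q) p ^ 2 := by
        gcongr with i
        exact Finset.single_le_sum (f := fun j => ∂ₓ[i] (∂ₓ[j] Q) p ^ 2)
          (fun j _ => sq_nonneg _) (Finset.mem_univ i)

lemma mul_liYauQuantity_le_of_isMax (hQ : SmoothPeriodic Q) (hheat : IsLogHeatSolution Q)
    {a : ℝ} {p₀ : ℝ × (Fin n → ℝ)} (hp₀ : p₀ ∈ posTime n) (hap₀ : a < p₀.1)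
    (hW : 0 < liYauQuantity Q p₀)
    (htime : IsMaxOn (fun s => (s - a) * liYauQuantity Q (s, p₀.2)) (Set.Icc a p₀.1) p₀.1)
    (hspace : ∀ j, IsLocalMax (fun s : ℝ => liYauQuantity Q (p₀ + s • spaceDir j)) 0) :
    (p₀.1 - a) * liYauQuantity Q p₀ ≤ n := by
  have hWsmooth := hQ.liYauQuantity
  have htimeDeriv : 0 ≤ liYauQuantity Q p₀ + (p₀.1 - a) * ∂ₜ (liYauQuantity Q) p₀ := by
    have := ((hasDerivAt_id p₀.1).sub_const a).mul
      (hasDerivAt_timeSlice (hWsmooth.differentiableAt hp₀))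
    simpa using this.nonneg_of_isMaxOn_Icc htime hap₀
  have hcrit : ∀ j, ∂ₓ[j] (liYauQuantity Q) p₀ = 0 :=
    fun j => (hspace j).dirDeriv_eq_zero (hWsmooth.differentiableAt hp₀)
  have hlap : ∑ j, ∂ₓ[j] (∂ₓ[j] (liYauQuantity Q)) p₀ ≤ 0 :=
    Finset.sum_nonpos fun j _ => (hspace j).dirDeriv_dirDeriv_nonpos (hWsmooth.contDiffAt_two hp₀)
  have hevol := liYauQuantity_evolution hQ hheat hp₀
  simp only [hcrit, mul_zero, Finset.sum_const_zero] at hevol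
  have hCS := sq_liYauQuantity_le hheat hp₀ hW.le
  set W := liYauQuantity Q
  set S := ∑ i, ∑ j, ∂ₓ[i] (∂ₓ[j] Q) p₀ ^ 2
  have hτS : (p₀.1 - a) * S ≤ W p₀ := by nlinarith
  have hsq : (p₀.1 - a) * W p₀ * W p₀ ≤ n * W p₀ := by
    calc (p₀.1 - a) * W p₀ * W p₀ ≤ (p₀.1 - a) * (n * S) := by
          rw [mul_assoc, ← sq]
          exact mul_le_mul_of_nonneg_left hCS (by linarith)
      _ = n * ((p₀.1 - a) * S) := by ring
      _ ≤ n * W p₀ := mul_le_mul_of_nonneg_left hτS (Nat.cast_nonneg n)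
  exact le_of_mul_le_mul_right hsq hW

-- Nothing is known about `f` as `t → 0`, so the maximum principle is run on slabs
-- `[a, T] × ℝⁿ` with `a > 0`.
theorem liYau_shifted (hQ : SmoothPeriodic Q) (hheat : IsLogHeatSolution Q) {a : ℝ} (ha : 0 < a)
    {p : ℝ × (Fin n → ℝ)} (hap : a < p.1) : (p.1 - a) * liYauQuantity Q p ≤ n := by
  have hW := hQ.liYauQuantity
  set S := Set.Icc a p.1 ×ˢ (Set.univ : Set (Fin n → ℝ))
  have hS : ∀ q ∈ S, q ∈ posTime n := fun q hq => mem_posTime.mpr (ha.trans_le hq.1.1)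
  obtain ⟨p₀, hp₀, hmax⟩ := exists_isMaxOn_slab (g := fun q => (q.1 - a) * liYauQuantity Q q)
    hap.le
    (fun q hq => ((continuous_fst.sub continuous_const).continuousAt.mul
      (hW.contDiffAt q (hS q hq)).continuousAt).continuousWithinAt)
    (fun q hq m => by simp [hW.periodic q (hS q hq) m])
  refine (hmax ⟨⟨hap.le, le_rfl⟩, trivial⟩).trans ?_
  by_cases hneg : (p₀.1 - a) * liYauQuantity Q p₀ ≤ 0
  · exact hneg.trans (Nat.cast_nonneg n)
  push Not at hneg
  have hpos := (pos_and_pos_or_neg_and_neg_of_mul_pos hneg).resolve_right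
    fun h => absurd hp₀.1.1 (by linarith [h.1])
  refine mul_liYauQuantity_le_of_isMax hQ hheat (hS p₀ hp₀) (by linarith) hpos.2
    (fun s hs => ?_) (fun j => ?_)
  · exact hmax (show (s, p₀.2) ∈ S from ⟨⟨hs.1, hs.2.trans hp₀.1.2⟩, trivial⟩)
  · refine Filter.Eventually.of_forall fun s => ?_
    have hmem : p₀ + s • spaceDir j ∈ S := ⟨by simpa [spaceDir] using hp₀.1, trivial⟩
    show liYauQuantity Q _ ≤ liYauQuantity Q (p₀ + (0 : ℝ) • spaceDir j)
    rw [zero_smul, add_zero]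
    exact le_of_mul_le_mul_left (by simpa [spaceDir] using hmax hmem) hpos.1

theorem liYau (hQ : SmoothPeriodic Q) (hheat : IsLogHeatSolution Q) {p : ℝ × (Fin n → ℝ)}
    (hp : p ∈ posTime n) : p.1 * liYauQuantity Q p ≤ n := by
  have hlim : Tendsto (fun a => (p.1 - a) * liYauQuantity Q p) (𝓝[>] 0)
      (𝓝 (p.1 * liYauQuantity Q p)) := by
    have : Continuous fun a => (p.1 - a) * liYauQuantity Q p := by fun_prop
    simpa using (this.tendsto 0).mono_left nhdsWithin_le_nhds
  refine le_of_tendsto hlim ?_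
  filter_upwards [Ioo_mem_nhdsGT (mem_posTime.mp hp)] with a ha
  exact liYau_shifted hQ hheat ha.1 ha.2

end MaximumPrinciple

section Path

variable {n : ℕ}

lemma dirDeriv_mk (g : ℝ × (Fin n → ℝ) → ℝ) (p : ℝ × (Fin n → ℝ)) (a : ℝ) (x : Fin n → ℝ) :
    dirDeriv (a, x) g p = a * ∂ₜ g p + ∑ i, x i * ∂ₓ[i] g p := by
  have hdecomp : ((a, x) : ℝ × (Fin n → ℝ)) = a • timeDir n + ∑ i, x i • spaceDir i := by
    ext j
    · simp [timeDir, spaceDir, Prod.fst_sum]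
    · simp [timeDir, spaceDir, Prod.snd_sum, Finset.sum_apply, Pi.single_apply]
  simp only [dirDeriv, hdecomp, map_add, map_sum, map_smul, smul_eq_mul]

theorem harnack_along_path {Q : ℝ × (Fin n → ℝ) → ℝ} {c : ℝ}
    (hQ : ∀ p ∈ posTime n, DifferentiableAt ℝ Q p)
    (hLY : ∀ p ∈ posTime n, p.1 * liYauQuantity Q p ≤ c)
    {t₁ t₂ : ℝ} (ht₁ : 0 < t₁) (ht₁₂ : t₁ ≤ t₂) {γ γ' : ℝ → Fin n → ℝ}
    (hγ : ∀ t ∈ Set.Icc t₁ t₂, HasDerivAt γ (γ' t) t) (hγ' : ContinuousOn γ' (Set.Icc t₁ t₂)) :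
    Q (t₁, γ t₁) ≤ Q (t₂, γ t₂) + c * Real.log (t₂ / t₁)
      + (1 / 2) * ∫ t in t₁..t₂, ∑ i, γ' t i ^ 2 := by
  have hmem : ∀ t ∈ Set.Icc t₁ t₂, (t, γ t) ∈ posTime n :=
    fun t ht => mem_posTime.mpr (ht₁.trans_le ht.1)
  have hderiv : ∀ t ∈ Set.Icc t₁ t₂, HasDerivAt (fun s => Q (s, γ s))
      (∂ₜ Q (t, γ t) + ∑ i, γ' t i * ∂ₓ[i] Q (t, γ t)) t := by
    intro t ht
    simpa [dirDeriv_mk] using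
      HasDerivAt.comp_dirDeriv (hQ _ (hmem t ht)) ((hasDerivAt_id t).prodMk (hγ t ht))
  have hlower : ∀ t ∈ Set.Icc t₁ t₂, -(c * t⁻¹) - (1 / 2) * ∑ i, γ' t i ^ 2
      ≤ ∂ₜ Q (t, γ t) + ∑ i, γ' t i * ∂ₓ[i] Q (t, γ t) := by
    intro t ht
    have ht0 : 0 < t := ht₁.trans_le ht.1
    have hW : liYauQuantity Q (t, γ t) ≤ c * t⁻¹ := by
      rw [← div_eq_mul_inv, le_div_iff₀ ht0, mul_comm]
      exact hLY _ (hmem t ht)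
    have hcross : -((1 / 2) * ∑ i, γ' t i ^ 2) - (1 / 2) * ∑ i, ∂ₓ[i] Q (t, γ t) ^ 2
        ≤ ∑ i, γ' t i * ∂ₓ[i] Q (t, γ t) := by
      rw [Finset.mul_sum, Finset.mul_sum, ← Finset.sum_neg_distrib, ← Finset.sum_sub_distrib]
      exact Finset.sum_le_sum fun i _ => by nlinarith [sq_nonneg (γ' t i + ∂ₓ[i] Q (t, γ t))]
    rw [liYauQuantity] at hW
    linarith
  have hinv : ContinuousOn (fun t => -(c * t⁻¹)) (Set.Icc t₁ t₂) :=
    ((continuousOn_inv₀.mono fun t ht => (ht₁.trans_le ht.1).ne').const_smul c).neg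
  have hsq : ContinuousOn (fun t => (1 / 2) * ∑ i, γ' t i ^ 2) (Set.Icc t₁ t₂) :=
    continuousOn_const.mul (continuousOn_finsetSum _ fun i _ =>
      ((continuous_apply i).comp_continuousOn hγ').pow 2)
  have hint := intervalIntegral.integral_le_sub_of_hasDeriv_right_of_le
    (φ := fun t => -(c * t⁻¹) - (1 / 2) * ∑ i, γ' t i ^ 2) ht₁₂
    (fun t ht => (hderiv t ht).continuousAt.continuousWithinAt)
    (fun t ht => (hderiv t (Set.Ioo_subset_Icc_self ht)).hasDerivWithinAt)
    (hinv.sub hsq).integrableOn_Icc (fun t ht => hlower t (Set.Ioo_subset_Icc_self ht))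
  rw [← Set.uIcc_of_le ht₁₂] at hinv hsq
  rw [intervalIntegral.integral_sub hinv.intervalIntegrable hsq.intervalIntegrable,
    intervalIntegral.integral_neg,
    intervalIntegral.integral_const_mul, intervalIntegral.integral_const_mul,
    integral_inv_of_pos ht₁ (ht₁.trans_le ht₁₂)] at hint
  linarith

end Path

section HeatEquation

variable {n : ℕ}

lemma smoothPeriodic_uncurry {f : ℝ → (Fin n → ℝ) → ℝ}
    (hsmooth : ContDiffOn ℝ (⊤ : ℕ∞) (fun p : ℝ × (Fin n → ℝ) => f p.1 p.2) (posTime n))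
    (hper : ∀ t > (0 : ℝ), ∀ x : Fin n → ℝ, ∀ m : Fin n → ℤ,
      f t (x + fun i => (m i : ℝ)) = f t x) :
    SmoothPeriodic fun p : ℝ × (Fin n → ℝ) => f p.1 p.2 where
  contDiffAt p hp := hsmooth.contDiffAt (posTime_mem_nhds hp)
  periodic p hp m := by simpa using hper p.1 (mem_posTime.mp hp) p.2 m

lemma heat_uncurry {f : ℝ → (Fin n → ℝ) → ℝ}
    (hf : SmoothPeriodic fun p : ℝ × (Fin n → ℝ) => f p.1 p.2)
    (hheat : ∀ t > (0 : ℝ), ∀ x : Fin n → ℝ, deriv (fun s => f s x) t = lap (f t) x) :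
    ∀ p ∈ posTime n, ∂ₜ (fun p => f p.1 p.2) p
      = ∑ i, ∂ₓ[i] (∂ₓ[i] fun p => f p.1 p.2) p := by
  rintro ⟨t, x⟩ hp
  have hslice : ∀ i, pd i (f t) = fun y => ∂ₓ[i] (fun p => f p.1 p.2) (t, y) :=
    fun i => funext fun y => pd_spaceSlice (hf.differentiableAt (p := (t, y)) hp) i
  rw [← (hasDerivAt_timeSlice (hf.differentiableAt hp)).deriv, hheat t hp.1 x, lap]
  exact Finset.sum_congr rfl fun i _ => by
    rw [hslice i, pd_spaceSlice ((hf.dirDeriv _).differentiableAt hp)]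

lemma isLogHeatSolution_log {F : ℝ × (Fin n → ℝ) → ℝ} (hF : SmoothPeriodic F)
    (hpos : ∀ p ∈ posTime n, 0 < F p)
    (hheat : ∀ p ∈ posTime n, ∂ₜ F p = ∑ i, ∂ₓ[i] (∂ₓ[i] F) p) :
    IsLogHeatSolution fun p => Real.log (F p) := by
  have hlog : ∀ p ∈ posTime n, ∀ v, dirDeriv v (fun q => Real.log (F q)) p = dirDeriv v F p / F p :=
    fun p hp v => dirDeriv_log (hF.differentiableAt hp) (hpos p hp).ne'
  intro p hp
  have hFp := (hpos p hp).ne'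
  have hlog₂ : ∀ i, ∂ₓ[i] (∂ₓ[i] fun q => Real.log (F q)) p
      = (∂ₓ[i] (∂ₓ[i] F) p * F p - ∂ₓ[i] F p * ∂ₓ[i] F p) / F p ^ 2 := fun i => by
    rw [(Filter.eventuallyEq_of_mem (posTime_mem_nhds hp) fun q hq => hlog q hq _).dirDeriv_eq,
      dirDeriv_div ((hF.dirDeriv _).differentiableAt hp) (hF.differentiableAt hp) hFp]
  rw [hlog p hp, hheat p hp, Finset.sum_div, ← Finset.sum_add_distrib]
  refine Finset.sum_congr rfl fun i _ => ?_
  rw [hlog₂, hlog p hp]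
  field_simp
  ring

end HeatEquation

theorem integrated_harnack_general
    (n : ℕ) (f : ℝ → (Fin n → ℝ) → ℝ)
    (hsmooth : ContDiffOn ℝ (⊤ : ℕ∞) (fun p : ℝ × (Fin n → ℝ) => f p.1 p.2)
      (Set.Ioi 0 ×ˢ Set.univ))
    (hpos : ∀ t > (0:ℝ), ∀ x : Fin n → ℝ, 0 < f t x)
    (hheat : ∀ t > (0:ℝ), ∀ x : Fin n → ℝ, deriv (fun s => f s x) t = lap (f t) x)
    (hper : ∀ t > (0:ℝ), ∀ x : Fin n → ℝ, ∀ m : Fin n → ℤ,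
      f t (x + fun i => (m i : ℝ)) = f t x)
    (t₁ t₂ : ℝ) (ht₁ : 0 < t₁) (ht₁₂ : t₁ < t₂)
    (x₁ x₂ : Fin n → ℝ) (γ γ' : ℝ → Fin n → ℝ)
    (hγ : ∀ t ∈ Set.Icc t₁ t₂, HasDerivAt γ (γ' t) t)
    (hγ' : ContinuousOn γ' (Set.Icc t₁ t₂))
    (hstart : γ t₁ = x₁) (hend : γ t₂ = x₂) :
    f t₁ x₁ ≤ f t₂ x₂ * (t₂ / t₁) ^ n *
      Real.exp ((1 / 2) * ∫ t in t₁..t₂, ∑ i, (γ' t i) ^ 2) := by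
  have hF := smoothPeriodic_uncurry hsmooth hper
  have hFpos : ∀ p ∈ posTime n, 0 < f p.1 p.2 := fun p hp => hpos p.1 (mem_posTime.mp hp) p.2
  have hQ := hF.log hFpos
  have hQheat := isLogHeatSolution_log hF hFpos (heat_uncurry hF hheat)
  have hpath := harnack_along_path (fun p hp => hQ.differentiableAt hp)
    (fun p hp => liYau hQ hQheat hp) ht₁ ht₁₂.le hγ hγ'
  rw [hstart, hend, ← Real.log_pow, ← Real.exp_le_exp, Real.exp_add, Real.exp_add,
    Real.exp_log (hpos t₁ ht₁ x₁), Real.exp_log (hpos t₂ (ht₁.trans ht₁₂) x₂),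
    Real.exp_log (pow_pos (div_pos (ht₁.trans ht₁₂) ht₁) n)] at hpath
  exact hpath

/-- Theorem 2.3: integrated Harnack inequality
`f(x₁,t₁) ≤ f(x₂,t₂) (t₂/t₁)ⁿ e^{Γ/2}` along any C¹ space-time path. -/
theorem integrated_harnack
    (n : ℕ) (hn : 1 ≤ n) (f : ℝ → (Fin n → ℝ) → ℝ)
    (hsmooth : ContDiffOn ℝ (⊤ : ℕ∞) (fun p : ℝ × (Fin n → ℝ) => f p.1 p.2)
      (Set.Ioi 0 ×ˢ Set.univ))
    (hpos : ∀ t > (0:ℝ), ∀ x : Fin n → ℝ, 0 < f t x)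
    (hheat : ∀ t > (0:ℝ), ∀ x : Fin n → ℝ, deriv (fun s => f s x) t = lap (f t) x)
    (hper : ∀ t > (0:ℝ), ∀ x : Fin n → ℝ, ∀ m : Fin n → ℤ,
      f t (x + fun i => (m i : ℝ)) = f t x)
    (t₁ t₂ : ℝ) (ht₁ : 0 < t₁) (ht₁₂ : t₁ < t₂)
    (x₁ x₂ : Fin n → ℝ) (γ γ' : ℝ → Fin n → ℝ)
    (hγ : ∀ t ∈ Set.Icc t₁ t₂, HasDerivAt γ (γ' t) t)
    (hγ' : ContinuousOn γ' (Set.Icc t₁ t₂))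
    (hstart : γ t₁ = x₁) (hend : γ t₂ = x₂) :
    f t₁ x₁ ≤ f t₂ x₂ * (t₂ / t₁) ^ n *
      Real.exp ((1 / 2) * ∫ t in t₁..t₂, ∑ i, (γ' t i) ^ 2) :=
  integrated_harnack_general n f hsmooth hpos hheat hper t₁ t₂ ht₁ ht₁₂ x₁ x₂ γ γ' hγ hγ' hstart
    hend
end
end
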